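/- arXiv:1606.03175 — 2 statements merged into one kernel-verified Lean document; each statement's English description precedes it below -/
import Mathlib

section
/- Let $N, K_t$ be positive integers and let $M_r$ be a real number with $1.1 \le M_r \le 0.092 N$. Set $s = \lfloor 0.3 N / M_r \rfloor$. Then $\frac{1}{K_t}\left(s - \frac{s^2}{1 - s/N}\cdot\frac{M_r}{N}\right) \ge \frac{1.092}{13.5}\cdot\frac{N}{K_t M_r}$. -/
theorem stmt_8 (N Kt : ℕ) (hN : 1 ≤ N) (hKt : 1 ≤ Kt)
    (Mr : ℝ) (hMr1 : (1.1 : ℝ) ≤ Mr) (hMr2 : Mr ≤ (0.092 : ℝ) * N)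
    (s : ℕ) (hs : s = ⌊(0.3 : ℝ) * N / Mr⌋₊) :
    (1 / (Kt : ℝ)) * ((s : ℝ) - (s : ℝ) ^ 2 / (1 - (s : ℝ) / N) * (Mr / N)) ≥
      (1.092 / 13.5) * ((N : ℝ) / (Kt * Mr)) := by
  have hMr0 : (0:ℝ) < Mr := by linarith
  have hN0 : (0:ℝ) < (N:ℝ) := by exact_mod_cast hN
  have hKt0 : (0:ℝ) < (Kt:ℝ) := by exact_mod_cast hKt
  have hx0 : (0:ℝ) ≤ 0.3 * N / Mr := by positivity
  have hsle : (s:ℝ) * Mr ≤ 0.3 * N := by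
    have h := Nat.floor_le hx0
    rw [← hs] at h
    calc (s:ℝ) * Mr ≤ (0.3 * N / Mr) * Mr := by nlinarith
      _ = 0.3 * N := by field_simp
  have hsge : 0.3 * N ≤ ((s:ℝ) + 1) * Mr := by
    have h := Nat.lt_floor_add_one ((0.3:ℝ) * N / Mr)
    rw [← hs] at h
    have := (div_lt_iff₀ hMr0).mp h
    linarith
  have hs0 : (0:ℝ) ≤ (s:ℝ) := Nat.cast_nonneg s
  have hsN : (s:ℝ) ≤ 3/11 * N := by nlinarith
  have hDpos : (0:ℝ) < 1 - (s:ℝ)/N := by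
    rw [sub_pos, div_lt_one hN0]; linarith
  have hNs : (0:ℝ) < (N:ℝ) - s := by nlinarith [hsN, hN0]
  have key : (s:ℝ) - (s:ℝ)^2/(1 - (s:ℝ)/N) * (Mr/N) ≥ 1.092/13.5 * (N/Mr) := by
    rw [ge_iff_le, ← sub_nonneg]
    have heq : (s:ℝ) - (s:ℝ)^2/(1 - (s:ℝ)/N) * (Mr/N) - 1.092/13.5 * (N/Mr)
        = ((s:ℝ)*(N - s)*Mr - s^2*Mr^2 - 1.092/13.5*N*(N - s)) / (((N:ℝ) - s)*Mr) := by
      have h1 : (1:ℝ) - (s:ℝ)/N = ((N:ℝ) - s)/N := by field_simp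
      rw [h1]
      field_simp
    rw [heq]
    apply div_nonneg _ (by positivity)
    nlinarith [mul_nonneg (sub_nonneg.2 hsle) (sub_nonneg.2 hsge),
      sq_nonneg ((s:ℝ)*Mr - 0.3*N), mul_pos hMr0 hN0, sq_nonneg ((N:ℝ) - s),
      mul_nonneg (mul_nonneg hs0 hMr0.le) (sub_nonneg.2 hsle),
      mul_nonneg (sub_nonneg.2 hMr1) (mul_nonneg hs0 hN0.le)]
  have hrhs : (1.092/13.5) * ((N:ℝ) / (Kt * Mr)) = (1/(Kt:ℝ)) * (1.092/13.5 * (N/Mr)) := by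
    field_simp
  rw [hrhs, ge_iff_le]
  apply mul_le_mul_of_nonneg_left key (by positivity)
end

section
/- Over $\mathrm{GF}(2)$-valued file parts, the $M_r = 1/3$ scheme for the $2\times2$ network is correct: for files $A = (A_1,A_2,A_3)$, $B = (B_1,B_2,B_3)$ with each $A_i, B_i \in \mathrm{GF}(2)^k$, and demands $(A, B)$, receiver 1 — knowing its cache $A_1\oplus B_1$ and receiving $V_{11} = A_3$, $V_{12} = A_2\oplus A_3$, and $V_{21}\oplus V_{22} = (B_1\oplus B_3)\oplus B_3 = B_1$ — can compute $A_1, A_2, A_3$; and receiver 2 — knowing its cache $A_2\oplus B_2$ and receiving $V_{21} = B_1\oplus B_3$, $V_{22} = B_3$, and $V_{11}\oplus V_{12} = A_3 \oplus (A_2\oplus A_3) = A_2$ — can compute $B_1, B_2, B_3$. -/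
theorem stmt_19 (k : ℕ) (A1 A2 A3 B1 B2 B3 : Fin k → ZMod 2) :
    -- messages for demands (A, B)
    ∀ V11 V12 V21 V22 : Fin k → ZMod 2,
      V11 = A3 → V12 = A2 + A3 → V21 = B1 + B3 → V22 = B3 →
        -- receiver 1: cache A1 ⊕ B1, observations V11, V12, V21 ⊕ V22
        ((A1 + B1) + (V21 + V22) = A1 ∧ V12 + V11 = A2 ∧ V11 = A3) ∧
        -- receiver 2: cache A2 ⊕ B2, observations V21, V22, V11 ⊕ V12
        (V21 + V22 = B1 ∧ (A2 + B2) + (V11 + V12) = B2 ∧ V22 = B3) := by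
  intro V11 V12 V21 V22 h1 h2 h3 h4
  subst h1 h2 h3 h4
  refine ⟨⟨?_, ?_, rfl⟩, ?_, ?_, rfl⟩ <;>
    funext i <;> simp [Pi.add_apply] <;> ring_nf <;>
    simp [CharTwo.two_eq_zero] <;> ring
end
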